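/- The function θ(Y,t) = (e^{at}/2)[exp(Y√(Pr·(b+a)))·erfc(Y√Pr/(2√t) + √((b+a)t)) + exp(−Y√(Pr·(b+a)))·erfc(Y√Pr/(2√t) − √((b+a)t))], with b = R/Pr, satisfies the radiative heat equation Pr·∂θ/∂t = ∂²θ/∂Y² − R·θ for all Y > 0, t > 0. -/

import Mathlib

open Real Filter

noncomputable def erfc (x : ℝ) : ℝ :=
  (2 / Real.sqrt Real.pi) * ∫ s in Set.Ioi x, Real.exp (-s ^ 2)

/-!
Put `c = b + a` and `f_κ(x, t) = e^{κx} erfc(x/(2√t) + κ√t)`, so that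
`θ(Y, t) = e^{at} (f_{√c} + f_{-√c})(√Pr Y, t) / 2`. Completing the square,
`e^{κx} e^{-(x/(2√t) + κ√t)²} = e^{-x²/(4t) - κ²t}`, which makes every derivative of `f_κ`
explicit and gives `∂ₜf_κ = ∂ₓ²f_κ - κ² f_κ`. The equation `ν ∂ₜu = ∂ᵧ²u - k u` is linear, becomes
`(μ²ν, μ²k)` under `y ↦ μy` and `(ν, k - νa)` after multiplying by `e^{at}`; with `μ = √Pr` and
`κ² = c` this is `Pr ∂ₜθ = ∂ᵧ²θ - (Pr c - Pr a) θ`, and `Pr c - Pr a = R`.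
-/

open MeasureTheory Topology

theorem hasDerivAt_integral_Ioi {f : ℝ → ℝ} (hf : Integrable f) (hfc : Continuous f) (x : ℝ) :
    HasDerivAt (fun y => ∫ s in Set.Ioi y, f s) (-f x) x := by
  have hsplit : (fun y => ∫ s in Set.Ioi y, f s) =
      fun y => (∫ s in Set.Ioi 0, f s) - ∫ s in (0 : ℝ)..y, f s := by
    funext y
    rw [← intervalIntegral.integral_Ioi_sub_Ioi' hf.integrableOn hf.integrableOn, sub_sub_cancel]
  rw [hsplit]
  exact (hasDerivAt_const x _).sub (hfc.integral_hasStrictDerivAt 0 x).hasDerivAt |>.congr_deriv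
    (zero_sub _)

theorem hasDerivAt_erfc (x : ℝ) :
    HasDerivAt erfc (-(2 / √π * exp (-x ^ 2))) x := by
  have hint : Integrable fun s : ℝ => exp (-s ^ 2) := by
    simpa using integrable_exp_neg_mul_sq one_pos
  have := (hasDerivAt_integral_Ioi hint (by fun_prop) x).const_mul (2 / √π)
  rwa [mul_neg] at this

theorem HasDerivAt.erfc {f : ℝ → ℝ} {f' x : ℝ} (hf : HasDerivAt f f' x) :
    HasDerivAt (fun y => erfc (f y)) (-(2 / √π * Real.exp (-f x ^ 2)) * f') x :=
  (hasDerivAt_erfc (f x)).comp x hf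

noncomputable def erfcProfile (κ x t : ℝ) : ℝ :=
  exp (κ * x) * erfc (x / (2 * √t) + κ * √t)

noncomputable def gaussKernel (κ x t : ℝ) : ℝ :=
  exp (-(x ^ 2 / (4 * t)) - κ ^ 2 * t) / √(π * t)

section Profile

variable {t : ℝ} (κ x : ℝ)

theorem exp_mul_exp_neg_sq_eq (ht : 0 < t) :
    exp (κ * x) * exp (-(x / (2 * √t) + κ * √t) ^ 2) = exp (-(x ^ 2 / (4 * t)) - κ ^ 2 * t) := by
  obtain ⟨s, hs, rfl⟩ : ∃ s, 0 < s ∧ t = s ^ 2 := ⟨√t, sqrt_pos.2 ht, (sq_sqrt ht.le).symm⟩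
  rw [← exp_add, sqrt_sq hs.le]
  congr 1
  field_simp
  ring

theorem gaussKernel_eq (ht : 0 < t) :
    gaussKernel κ x t = exp (κ * x) * exp (-(x / (2 * √t) + κ * √t) ^ 2) / (√π * √t) := by
  rw [gaussKernel, exp_mul_exp_neg_sq_eq κ x ht, sqrt_mul pi_pos.le]

theorem hasDerivAt_erfcProfile_space (ht : 0 < t) :
    HasDerivAt (fun x => erfcProfile κ x t) (κ * erfcProfile κ x t - gaussKernel κ x t) x := by
  have hz : HasDerivAt (fun x => x / (2 * √t) + κ * √t) (1 / (2 * √t)) x :=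
    ((hasDerivAt_id' x).div_const _).add_const _
  refine (((hasDerivAt_id' x).const_mul κ).exp.mul hz.erfc).congr_deriv ?_
  have hs : √t ≠ 0 := (sqrt_pos.2 ht).ne'
  rw [erfcProfile, gaussKernel_eq κ x ht]
  field_simp
  ring

theorem hasDerivAt_gaussKernel_space :
    HasDerivAt (fun x => gaussKernel κ x t) (-(x / (2 * t)) * gaussKernel κ x t) x := by
  have hq : HasDerivAt (fun x => -(x ^ 2 / (4 * t)) - κ ^ 2 * t) (-(2 * x / (4 * t))) x := by
    simpa using ((hasDerivAt_pow 2 x).div_const (4 * t)).neg.sub_const (κ ^ 2 * t)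
  refine (hq.exp.div_const (√(π * t))).congr_deriv ?_
  rw [gaussKernel]
  ring

theorem hasDerivAt_erfcProfile_time (ht : 0 < t) :
    HasDerivAt (fun t => erfcProfile κ x t) ((x / (2 * t) - κ) * gaussKernel κ x t) t := by
  have hsqrt := hasDerivAt_sqrt ht.ne'
  have hz : HasDerivAt (fun t => x / (2 * √t) + κ * √t)
      ((0 * (2 * √t) - x * (2 * (1 / (2 * √t)))) / (2 * √t) ^ 2 + κ * (1 / (2 * √t))) t :=
    ((hasDerivAt_const t x).fun_div (hsqrt.const_mul 2) (by positivity)).add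
      (hsqrt.const_mul κ)
  refine (hz.erfc.const_mul (exp (κ * x))).congr_deriv ?_
  rw [gaussKernel_eq κ x ht]
  obtain ⟨s, hs, rfl⟩ : ∃ s, 0 < s ∧ t = s ^ 2 := ⟨√t, sqrt_pos.2 ht, (sq_sqrt ht.le).symm⟩
  rw [sqrt_sq hs.le]
  field_simp
  ring

end Profile

/-- `ν ∂ₜu = ∂ᵧ²u - k u` at `(Y, t)`, with `uᵧ` a space derivative of `u` near `Y`. -/
def SolvesDampedHeatAt (ν k : ℝ) (u : ℝ → ℝ → ℝ) (Y t : ℝ) : Prop :=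
  ∃ (uₜ : ℝ) (uᵧ : ℝ → ℝ) (uᵧᵧ : ℝ), HasDerivAt (fun τ => u Y τ) uₜ t ∧
    (∀ᶠ y in 𝓝 Y, HasDerivAt (fun y => u y t) (uᵧ y) y) ∧ HasDerivAt uᵧ uᵧᵧ Y ∧
    ν * uₜ = uᵧᵧ - k * u Y t

namespace SolvesDampedHeatAt

variable {ν k : ℝ} {u v : ℝ → ℝ → ℝ} {Y t : ℝ}

theorem deriv_eq (h : SolvesDampedHeatAt ν k u Y t) :
    ν * deriv (fun τ => u Y τ) t = deriv (deriv fun y => u y t) Y - k * u Y t := by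
  obtain ⟨uₜ, uᵧ, uᵧᵧ, ht, hy, hyy, heq⟩ := h
  have hderiv : deriv (fun y => u y t) =ᶠ[𝓝 Y] uᵧ := hy.mono fun y hy => hy.deriv
  rw [ht.deriv, hderiv.deriv_eq, hyy.deriv, heq]

theorem add (hu : SolvesDampedHeatAt ν k u Y t) (hv : SolvesDampedHeatAt ν k v Y t) :
    SolvesDampedHeatAt ν k (fun y τ => u y τ + v y τ) Y t := by
  obtain ⟨uₜ, uᵧ, uᵧᵧ, hut, huy, huyy, hu⟩ := hu
  obtain ⟨vₜ, vᵧ, vᵧᵧ, hvt, hvy, hvyy, hv⟩ := hv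
  refine ⟨uₜ + vₜ, fun y => uᵧ y + vᵧ y, uᵧᵧ + vᵧᵧ, hut.add hvt,
    (huy.and hvy).mono fun y h => h.1.add h.2, huyy.add hvyy, ?_⟩
  linear_combination hu + hv

theorem const_mul (c : ℝ) (hu : SolvesDampedHeatAt ν k u Y t) :
    SolvesDampedHeatAt ν k (fun y τ => c * u y τ) Y t := by
  obtain ⟨uₜ, uᵧ, uᵧᵧ, hut, huy, huyy, hu⟩ := hu
  refine ⟨c * uₜ, fun y => c * uᵧ y, c * uᵧᵧ, hut.const_mul c,
    huy.mono fun y h => h.const_mul c, huyy.const_mul c, ?_⟩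
  linear_combination c * hu

theorem exp_mul (a : ℝ) (hu : SolvesDampedHeatAt ν k u Y t) :
    SolvesDampedHeatAt ν (k - ν * a) (fun y τ => exp (a * τ) * u y τ) Y t := by
  obtain ⟨uₜ, uᵧ, uᵧᵧ, hut, huy, huyy, hu⟩ := hu
  refine ⟨a * exp (a * t) * u Y t + exp (a * t) * uₜ, fun y => exp (a * t) * uᵧ y,
    exp (a * t) * uᵧᵧ, ?_, huy.mono fun y h => h.const_mul _, huyy.const_mul _, ?_⟩
  · exact (((hasDerivAt_id' t).const_mul a).exp.mul hut).congr_deriv (by ring)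
  · linear_combination exp (a * t) * hu

theorem comp_mul (μ : ℝ) (hu : SolvesDampedHeatAt ν k u (μ * Y) t) :
    SolvesDampedHeatAt (μ ^ 2 * ν) (μ ^ 2 * k) (fun y τ => u (μ * y) τ) Y t := by
  obtain ⟨uₜ, uᵧ, uᵧᵧ, hut, huy, huyy, hu⟩ := hu
  have hμ (y : ℝ) : HasDerivAt (fun y => μ * y) μ y := by
    simpa using (hasDerivAt_id' y).const_mul μ
  refine ⟨uₜ, fun y => μ * uᵧ (μ * y), μ ^ 2 * uᵧᵧ, hut, ?_, ?_, ?_⟩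
  · filter_upwards [(hμ Y).continuousAt.tendsto.eventually huy] with y hy
    exact (hy.comp y (hμ y)).congr_deriv (mul_comm _ _)
  · exact ((huyy.comp Y (hμ Y)).const_mul μ).congr_deriv (by ring)
  · linear_combination μ ^ 2 * hu

end SolvesDampedHeatAt

theorem solvesDampedHeatAt_erfcProfile (κ x : ℝ) {t : ℝ} (ht : 0 < t) :
    SolvesDampedHeatAt 1 (κ ^ 2) (erfcProfile κ) x t := by
  refine ⟨_, _, _, hasDerivAt_erfcProfile_time κ x ht,
    Eventually.of_forall fun y => hasDerivAt_erfcProfile_space κ y ht,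
    ((hasDerivAt_erfcProfile_space κ x ht).const_mul κ).sub (hasDerivAt_gaussKernel_space κ x), ?_⟩
  ring

theorem stmt_3_general (Pr R a : ℝ) (hPr : 0 < Pr) (hba : R / Pr + a > 0) :
    ∀ Y t : ℝ, 0 < Y → 0 < t →
    (let b : ℝ := R / Pr
     let θ : ℝ → ℝ → ℝ := fun Y t =>
      (Real.exp (a * t) / 2) * (Real.exp (Y * Real.sqrt (Pr * (b + a))) * erfc (Y * Real.sqrt Pr / (2 * Real.sqrt t) + Real.sqrt ((b + a) * t))
        + Real.exp (-(Y * Real.sqrt (Pr * (b + a)))) * erfc (Y * Real.sqrt Pr / (2 * Real.sqrt t) - Real.sqrt ((b + a) * t)))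
     Pr * deriv (fun τ => θ Y τ) t = deriv (deriv (fun y => θ y t)) Y - R * θ Y t) := by
  intro Y t _ ht b θ
  have hc : 0 ≤ b + a := hba.le
  have hθ : θ = fun y τ => exp (a * τ) *
      (2⁻¹ * (erfcProfile √(b + a) (√Pr * y) τ + erfcProfile (-√(b + a)) (√Pr * y) τ)) := by
    funext y τ
    simp only [θ, erfcProfile, sqrt_mul hPr.le, sqrt_mul hc]
    ring_nf
  have hsol : SolvesDampedHeatAt Pr R θ Y t := by
    have hprofile (κ : ℝ) (hκ : κ ^ 2 = b + a) :
        SolvesDampedHeatAt Pr (Pr * (b + a)) (fun y τ => erfcProfile κ (√Pr * y) τ) Y t := by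
      simpa [hκ, sq_sqrt hPr.le] using (solvesDampedHeatAt_erfcProfile κ _ ht).comp_mul √Pr
    have := (((hprofile _ (sq_sqrt hc)).add
      (hprofile _ (by rw [neg_sq, sq_sqrt hc]))).const_mul 2⁻¹).exp_mul a
    rwa [← hθ, show Pr * (b + a) - Pr * a = R by simp only [b]; field_simp; ring] at this
  exact hsol.deriv_eq

theorem stmt_3 (Pr R a : ℝ) (hPr : 0 < Pr) (hR : 0 < R) (hba : R / Pr + a > 0) :
    ∀ Y t : ℝ, 0 < Y → 0 < t →
    (let b : ℝ := R / Pr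
     let θ : ℝ → ℝ → ℝ := fun Y t =>
      (Real.exp (a * t) / 2) * (Real.exp (Y * Real.sqrt (Pr * (b + a))) * erfc (Y * Real.sqrt Pr / (2 * Real.sqrt t) + Real.sqrt ((b + a) * t))
        + Real.exp (-(Y * Real.sqrt (Pr * (b + a)))) * erfc (Y * Real.sqrt Pr / (2 * Real.sqrt t) - Real.sqrt ((b + a) * t)))
     Pr * deriv (fun τ => θ Y τ) t = deriv (deriv (fun y => θ y t)) Y - R * θ Y t) :=
  stmt_3_general Pr R a hPr hba
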